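/- Let n ≥ 3 and let σ, τ ∈ S_n have McMahon codes s and t respectively, with an index f, 2 ≤ f ≤ n−1, such that t_i = s_i for all i except t_f = s_f − 1 and t_{f+1} = s_{f+1} + 1. Suppose moreover there is a j with 0 ≤ j ≤ f−1 such that s_i = t_i = 0 for j < i ≤ f−1, and, if j > 0, then s_j = t_j ≠ 0 and s_i = t_i = i−1 for 1 ≤ i < j. Then τ = σ·⟨φ_j(f+1), φ_j(s_f)⟩, where φ_j(i) = j − s_j − i if 1 ≤ i ≤ j − (s_j + 1), φ_j(i) = 2j − s_j − i if j − (s_j + 1) < i ≤ j, and φ_j(i) = i if i > j. -/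

import Mathlib

/-- `rot u k` is the permutation `[[u,k]]` of `{1,…,u} ⊆ ℕ` obtained by `k`
right circular shifts of the first `u` entries of the identity (positions are
1-based; all other natural numbers are fixed): `[[u,k]] i = u - k + i` for
`1 ≤ i ≤ k`, `[[u,k]] i = i - k` for `k < i ≤ u` and `[[u,k]] i = i` for `i > u`.
It is (junk-)defined as the identity when `¬ k < u`. -/
def rot (u k : ℕ) : Equiv.Perm ℕ :=
  if _h : k < u then
    { toFun := fun i =>
        if 1 ≤ i ∧ i ≤ k then u - k + i
        else if k < i ∧ i ≤ u then i - k
        else i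
      invFun := fun j =>
        if u - k + 1 ≤ j ∧ j ≤ u then j - (u - k)
        else if 1 ≤ j ∧ j ≤ u - k then j + k
        else j
      left_inv := by intro i; dsimp only; split_ifs <;> omega
      right_inv := by intro j; dsimp only; split_ifs <;> omega }
  else 1

/-- `psi n t = [[n, t n]] · [[n-1, t (n-1)]] · ⋯ · [[2, t 2]] · [[1, t 1]]`, where
permutations act on indices, i.e. `(σ * τ) i = σ (τ i)`.  When `t` is a subexcedant
sequence of length `n`, `t` is called the McMahon code of the permutation `psi n t`. -/
def psi (n : ℕ) (t : ℕ → ℕ) : Equiv.Perm ℕ :=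
  ((List.range n).reverse.map (fun i => rot (i + 1) (t (i + 1)))).prod

/-- `c` is a subexcedant sequence of length `n`: `0 ≤ c i ≤ i - 1` for `1 ≤ i ≤ n`
(positions are 1-based). -/
def Subexcedant (n : ℕ) (c : ℕ → ℕ) : Prop :=
  ∀ i, 1 ≤ i → i ≤ n → c i ≤ i - 1

/-- The major index of a permutation of `{1,…,n}`:
`maj π = ∑_{1 ≤ i < n, π i > π (i+1)} i`. -/
def maj (n : ℕ) (π : Equiv.Perm ℕ) : ℕ :=
  ∑ i ∈ Finset.Ico 1 n, if π (i + 1) < π i then i else 0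

/-- The map `φ_j` of Proposition 6 of the paper (here `sj` stands for `s j`):
`φ_j i = j - sj - i` if `1 ≤ i ≤ j - (sj + 1)`, `φ_j i = 2j - sj - i` if
`j - (sj + 1) < i ≤ j`, and `φ_j i = i` if `i > j`. -/
def phiFn (j sj : ℕ) (i : ℕ) : ℕ :=
  if 1 ≤ i ∧ i ≤ j - (sj + 1) then j - sj - i
  else if j - (sj + 1) < i ∧ i ≤ j then 2 * j - sj - i
  else i

/-!
Write `k = s f`, `m = s (f+1)` and `β = [[f-1, s (f-1)]] ⋯ [[1, s 1]]`, the common tail of both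
products. The hypotheses on `j` say exactly that `β = [[j, s j]] · [[j-1, j-2]] ⋯ [[1, 0]]`, which is
the involution `φ_j`. At positions `f, f+1` a direct computation gives
`[[f+1, m+1]] · [[f, k-1]] = [[f+1, m]] · [[f, k]] · ⟨f+1, k⟩`, and moving the transposition past `β`
turns it into `⟨β⁻¹ (f+1), β⁻¹ k⟩ = ⟨φ_j (f+1), φ_j k⟩`. The factors above `f+1` coincide.
-/

lemma rot_apply {u k : ℕ} (h : k < u) (i : ℕ) :
    rot u k i = if 1 ≤ i ∧ i ≤ k then u - k + i
      else if k < i ∧ i ≤ u then i - k else i := by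
  unfold rot; rw [dif_pos h]; rfl

lemma rot_zero (u : ℕ) : rot u 0 = 1 := by
  ext i
  rcases Nat.eq_zero_or_pos u with h | h
  · simp [rot, h]
  · rw [rot_apply h]; simp only [Equiv.Perm.coe_one, id_eq]; split_ifs <;> omega

set_option maxHeartbeats 1600000 in
lemma rot_succ_mul_rot_pred {f k m : ℕ} (hk1 : 1 ≤ k) (hk : k < f) (hm : m < f) :
    rot (f + 1) (m + 1) * rot f (k - 1) = rot (f + 1) m * rot f k * Equiv.swap (f + 1) k := by
  ext i
  simp only [Equiv.Perm.mul_apply, Equiv.swap_apply_def]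
  rw [rot_apply (by omega : k - 1 < f), rot_apply (by omega : m + 1 < f + 1), rot_apply hk,
    rot_apply (by omega : m < f + 1)]
  split_ifs <;> omega

lemma psi_zero (s : ℕ → ℕ) : psi 0 s = 1 := by simp [psi]

lemma psi_succ (m : ℕ) (s : ℕ → ℕ) : psi (m + 1) s = rot (m + 1) (s (m + 1)) * psi m s := by
  simp [psi, List.range_succ]

lemma psi_congr {m : ℕ} {s t : ℕ → ℕ} (h : ∀ i, 1 ≤ i → i ≤ m → s i = t i) :
    psi m s = psi m t := by
  induction m with
  | zero => simp [psi_zero]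
  | succ m ih =>
    rw [psi_succ, psi_succ, h (m + 1) (by omega) le_rfl, ih fun i h1 h2 => h i h1 (by omega)]

lemma psi_eq_of_eq_zero {j m : ℕ} {s : ℕ → ℕ} (hjm : j ≤ m) (h : ∀ i, j < i → i ≤ m → s i = 0) :
    psi m s = psi j s := by
  induction m, hjm using Nat.le_induction with
  | base => rfl
  | succ m hjm ih =>
    rw [psi_succ, h (m + 1) (by omega) le_rfl, rot_zero, one_mul,
      ih fun i h1 h2 => h i h1 (by omega)]

lemma psi_apply_of_eq_pred {m : ℕ} {s : ℕ → ℕ} (h : ∀ i, 1 ≤ i → i ≤ m → s i = i - 1) (i : ℕ) :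
    psi m s i = if 1 ≤ i ∧ i ≤ m then m + 1 - i else i := by
  induction m with
  | zero => simp only [psi_zero, Equiv.Perm.coe_one, id_eq]; split_ifs <;> omega
  | succ m ih =>
    rw [psi_succ, Equiv.Perm.mul_apply, ih fun i h1 h2 => h i h1 (by omega),
      h (m + 1) (by omega) le_rfl, rot_apply (by omega)]
    split_ifs <;> omega

lemma psi_apply_eq_phiFn {j m : ℕ} {s : ℕ → ℕ} (hjm : j ≤ m)
    (hzero : ∀ i, j < i → i ≤ m → s i = 0) (hsj : 0 < j → s j < j)
    (hpred : 0 < j → ∀ i, 1 ≤ i → i < j → s i = i - 1) (i : ℕ) :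
    psi m s i = phiFn j (s j) i := by
  rw [psi_eq_of_eq_zero hjm hzero]
  rcases Nat.eq_zero_or_pos j with rfl | hj
  · simp only [psi_zero, Equiv.Perm.coe_one, id_eq]
    unfold phiFn
    split_ifs <;> omega
  · obtain ⟨J, rfl⟩ : ∃ J, j = J + 1 := ⟨j - 1, by omega⟩
    have := hsj hj
    rw [psi_succ, Equiv.Perm.mul_apply,
      psi_apply_of_eq_pred (fun i h1 h2 => hpred hj i h1 (by omega)), rot_apply (by omega)]
    unfold phiFn
    split_ifs <;> omega

lemma phiFn_involutive {j sj : ℕ} (hsj : 0 < j → sj < j) : Function.Involutive (phiFn j sj) := by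
  intro i
  rcases Nat.eq_zero_or_pos j with rfl | hj
  · unfold phiFn; split_ifs <;> omega
  · have := hsj hj; unfold phiFn; split_ifs <;> omega

lemma psi_succ_succ_transfer {f : ℕ} {s t : ℕ → ℕ} (hk1 : 1 ≤ s f) (hk : s f < f)
    (hm : s (f + 1) < f) (hft : t f + 1 = s f) (hft1 : t (f + 1) = s (f + 1) + 1)
    (heq : ∀ i, i < f → t i = s i) :
    psi (f + 1) t = psi (f + 1) s *
      Equiv.swap ((psi (f - 1) s)⁻¹ (f + 1)) ((psi (f - 1) s)⁻¹ (s f)) := by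
  obtain ⟨e, rfl⟩ : ∃ e, f = e + 1 := ⟨f - 1, by omega⟩
  have htail : psi e t = psi e s := psi_congr fun i _ hi => heq i (by omega)
  have hrot := rot_succ_mul_rot_pred hk1 hk hm
  rw [← hft1, show s (e + 1) - 1 = t (e + 1) by omega] at hrot
  simp only [Nat.add_sub_cancel, psi_succ, htail]
  rw [← mul_assoc, hrot, mul_assoc, Equiv.swap_mul_eq_mul_swap, ← mul_assoc, ← mul_assoc]

lemma psi_eq_mul_of_eq_of_le {k m : ℕ} {s t : ℕ → ℕ} {g : Equiv.Perm ℕ} (hkm : k ≤ m)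
    (h : psi k t = psi k s * g) (heq : ∀ i, k < i → i ≤ m → t i = s i) :
    psi m t = psi m s * g := by
  induction m, hkm using Nat.le_induction with
  | base => exact h
  | succ m hkm ih =>
    rw [psi_succ, psi_succ, heq (m + 1) (by omega) le_rfl,
      ih fun i h1 h2 => heq i h1 (by omega), mul_assoc]

theorem mcmahon_adjacent_transfer_phi_general (n f j : ℕ) (s t : ℕ → ℕ) (σ τ : Equiv.Perm ℕ)
    (hs : Subexcedant n s) (ht : Subexcedant n t)
    (hσ : σ = psi n s) (hτ : τ = psi n t)
    (hf1 : 2 ≤ f) (hf2 : f ≤ n - 1)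
    (heq : ∀ i, i ≠ f → i ≠ f + 1 → t i = s i)
    (hft : t f + 1 = s f) (hft1 : t (f + 1) = s (f + 1) + 1)
    (hjf : j ≤ f - 1)
    (hzero : ∀ i, j < i → i ≤ f - 1 → s i = 0 ∧ t i = 0)
    (hjpos : 0 < j → s j = t j ∧ s j ≠ 0 ∧ ∀ i, 1 ≤ i → i < j → s i = i - 1 ∧ t i = i - 1) :
    τ = σ * Equiv.swap (phiFn j (s j) (f + 1)) (phiFn j (s j) (s f)) := by
  subst hσ hτ
  have hsj : 0 < j → s j < j := fun hj => by have := hs j (by omega) (by omega); omega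
  have hβ : ∀ i, psi (f - 1) s i = phiFn j (s j) i :=
    psi_apply_eq_phiFn hjf (fun i h1 h2 => (hzero i h1 h2).1) hsj
      (fun hj i h1 h2 => ((hjpos hj).2.2 i h1 h2).1)
  have hβinv : ∀ i, (psi (f - 1) s)⁻¹ i = phiFn j (s j) i := fun i => by
    rw [Equiv.Perm.inv_eq_iff_eq, hβ, phiFn_involutive hsj]
  have hk := hs f (by omega) (by omega)
  have hm := ht (f + 1) (by omega) (by omega)
  have htransfer := psi_succ_succ_transfer (t := t) (by omega) (by omega) (by omega) hft hft1
    (fun i hi => heq i (by omega) (by omega))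
  rw [hβinv, hβinv] at htransfer
  exact psi_eq_mul_of_eq_of_le (by omega) htransfer fun i h1 _ => heq i (by omega) (by omega)

/-- let `σ, τ ∈ S_n` (`n ≥ 3`) have McMahon codes `s`, `t` agreeing
everywhere except that `t f = s f - 1` and `t (f+1) = s (f+1) + 1` for some
`2 ≤ f ≤ n-1`.  Suppose moreover there is `0 ≤ j ≤ f-1` with `s i = t i = 0` for
`j < i ≤ f-1` and, if `j > 0`, `s j = t j ≠ 0` and `s i = t i = i - 1` for
`1 ≤ i < j`.  Then `τ = σ · ⟨φ_j (f+1), φ_j (s f)⟩`. -/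
theorem mcmahon_adjacent_transfer_phi (n f j : ℕ) (s t : ℕ → ℕ) (σ τ : Equiv.Perm ℕ)
    (hn : 3 ≤ n) (hs : Subexcedant n s) (ht : Subexcedant n t)
    (hσ : σ = psi n s) (hτ : τ = psi n t)
    (hf1 : 2 ≤ f) (hf2 : f ≤ n - 1)
    (heq : ∀ i, i ≠ f → i ≠ f + 1 → t i = s i)
    (hft : t f + 1 = s f) (hft1 : t (f + 1) = s (f + 1) + 1)
    (hjf : j ≤ f - 1)
    (hzero : ∀ i, j < i → i ≤ f - 1 → s i = 0 ∧ t i = 0)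
    (hjpos : 0 < j → s j = t j ∧ s j ≠ 0 ∧ ∀ i, 1 ≤ i → i < j → s i = i - 1 ∧ t i = i - 1) :
    τ = σ * Equiv.swap (phiFn j (s j) (f + 1)) (phiFn j (s j) (s f)) :=
  mcmahon_adjacent_transfer_phi_general n f j s t σ τ hs ht hσ hτ hf1 hf2 heq hft hft1 hjf hzero
    hjpos
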